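/- arXiv:math/0606622 — 2 statements merged into one kernel-verified Lean document; each statement's English description precedes it below -/
import Mathlib

section
/- The function ρ is twice continuously differentiable on ℝ, with ρ′(x) = −∫_ℝ h′(y−x) h(y) dy and ρ″(x) = −∫_ℝ h′(y−x) h′(y) dy for all x ∈ ℝ; consequently |ρ″(x)| ≤ ∫_ℝ h′(y)² dy for all x, and ρ″(0) = −∫_ℝ h′(y)² dy. -/
/-!
Write `ρ = crossCorr h h` with `crossCorr f g x = ∫ f (y - x) g y`. In `L²` this is the pairing of
the translate of `f` by `x` with `g`; translation is an isometry that is continuous in `x`, so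
`crossCorr f g` is continuous and, by Cauchy–Schwarz, `|crossCorr f f x| ≤ crossCorr f f 0`.
For `f` of class `C¹`, the fundamental theorem of calculus in `y` and Fubini give
`crossCorr f g x - crossCorr f g 0 = -∫₀ˣ crossCorr f' g`, an integral of a continuous function,
whence the derivative. The identity `crossCorr f g (-x) = crossCorr g f x` moves the derivative
onto the second factor, which gives `ρ''` although `h'` need not be differentiable.
-/

open MeasureTheory

noncomputable def crossCorr (f g : ℝ → ℝ) (x : ℝ) : ℝ := ∫ y, f (y - x) * g y

section
variable {f g : ℝ → ℝ}

lemma integrable_comp_sub_mul (hf : MemLp f 2 volume) (hg : MemLp g 2 volume) (x : ℝ) :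
    Integrable (fun y => f (y - x) * g y) :=
  (hf.comp_measurePreserving (measurePreserving_sub_right volume x)).integrable_mul hg

lemma crossCorr_neg (f g : ℝ → ℝ) (x : ℝ) : crossCorr f g (-x) = crossCorr g f x := by
  rw [crossCorr, crossCorr, ← integral_sub_right_eq_self _ x]
  simp only [sub_neg_eq_add, sub_add_cancel, mul_comm]

lemma crossCorr_eq_inner (hf : MemLp f 2 volume) (hg : MemLp g 2 volume) (x : ℝ) :
    crossCorr f g x = inner ℝ (Lp.compMeasurePreserving (· - x)
      (measurePreserving_sub_right volume x) (hf.toLp f)) (hg.toLp g) := by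
  rw [L2.inner_def, crossCorr]
  refine integral_congr_ae ?_
  filter_upwards [Lp.coeFn_compMeasurePreserving (hf.toLp f) (measurePreserving_sub_right volume x),
    (measurePreserving_sub_right volume x).quasiMeasurePreserving.ae_eq_comp hf.coeFn_toLp,
    hg.coeFn_toLp] with y hy₁ hy₂ hy₃
  simp only [RCLike.inner_apply, conj_trivial, hy₁, hy₃, Function.comp_apply] at hy₂ ⊢
  rw [hy₂, mul_comm]

lemma continuous_crossCorr (hf : MemLp f 2 volume) (hg : MemLp g 2 volume) :
    Continuous (crossCorr f g) := by
  simp only [funext (crossCorr_eq_inner hf hg)]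
  refine Continuous.inner (continuous_iff_continuousAt.2 fun x => ?_) continuous_const
  exact tendsto_const_nhds.compMeasurePreservingLp
    ((ContinuousMap.mk (fun p : ℝ × ℝ => p.2 - p.1) (by fun_prop)).curry.continuous.tendsto x)
    (fun a => measurePreserving_sub_right volume a) _ ENNReal.ofNat_ne_top

lemma abs_crossCorr_le_crossCorr_zero (hf : MemLp f 2 volume) (x : ℝ) :
    |crossCorr f f x| ≤ crossCorr f f 0 := by
  have hmp := measurePreserving_sub_right (volume : Measure ℝ)
  have h₀ : Lp.compMeasurePreserving (· - 0) (hmp 0) (hf.toLp f) = hf.toLp f := by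
    simp only [sub_zero]
    exact Lp.compMeasurePreserving_id_apply _
  rw [crossCorr_eq_inner hf hf, crossCorr_eq_inner hf hf 0, h₀]
  calc _ ≤ ‖Lp.compMeasurePreserving (· - x) (hmp x) (hf.toLp f)‖ * ‖hf.toLp f‖ :=
        abs_real_inner_le_norm _ _
    _ = _ := by rw [Lp.norm_compMeasurePreserving, real_inner_self_eq_norm_mul_norm]

lemma integrable_uncurry_comp_sub_mul (hf : Continuous f) (hf₂ : MemLp f 2 volume)
    (hg : Continuous g) (hg₂ : MemLp g 2 volume) (a b : ℝ) :
    Integrable (Function.uncurry fun t y => f (y - t) * g y)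
      ((volume.restrict (Set.uIoc a b)).prod volume) := by
  have hcont : Continuous (Function.uncurry fun t y => f (y - t) * g y) := by fun_prop
  refine (integrable_prod_iff hcont.aestronglyMeasurable).2
    ⟨.of_forall (integrable_comp_sub_mul hf₂ hg₂), ?_⟩
  have hnorm : (fun t => ∫ y, ‖Function.uncurry (fun t y => f (y - t) * g y) (t, y)‖) =
      crossCorr (fun y => ‖f y‖) (fun y => ‖g y‖) := by
    funext t
    simp only [Function.uncurry_apply_pair, norm_mul, crossCorr]
  rw [hnorm]
  exact (continuous_crossCorr hf₂.norm hg₂.norm).integrableOn_uIoc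

lemma crossCorr_sub_crossCorr_zero (hf : ContDiff ℝ 1 f) (hf₂ : MemLp f 2 volume)
    (hf'₂ : MemLp (deriv f) 2 volume) (hg : Continuous g) (hg₂ : MemLp g 2 volume) (x : ℝ) :
    crossCorr f g x - crossCorr f g 0 = -∫ t in 0..x, crossCorr (deriv f) g t := by
  have hf' : Continuous (deriv f) := hf.continuous_deriv le_rfl
  have ftc : ∀ y, f (y - x) - f y = -∫ t in 0..x, deriv f (y - t) := by
    intro y
    rw [intervalIntegral.integral_comp_sub_left (deriv f) y, sub_zero,
      intervalIntegral.integral_deriv_eq_sub (fun z _ => hf.differentiable one_ne_zero z)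
        (hf'.intervalIntegrable _ _)]
    ring
  calc crossCorr f g x - crossCorr f g 0 = ∫ y, (f (y - x) - f y) * g y := by
        rw [crossCorr, crossCorr, ← integral_sub (integrable_comp_sub_mul hf₂ hg₂ x)
          (by simpa using integrable_comp_sub_mul hf₂ hg₂ 0)]
        simp only [sub_zero, sub_mul]
    _ = -∫ y, ∫ t in 0..x, deriv f (y - t) * g y := by
        rw [← integral_neg]
        congr 1
        funext y
        rw [ftc, neg_mul, intervalIntegral.integral_mul_const]
    _ = _ := by
        rw [← intervalIntegral_integral_swap (integrable_uncurry_comp_sub_mul hf' hf'₂ hg hg₂ 0 x)]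
        rfl

lemma hasDerivAt_crossCorr_left (hf : ContDiff ℝ 1 f) (hf₂ : MemLp f 2 volume)
    (hf'₂ : MemLp (deriv f) 2 volume) (hg : Continuous g) (hg₂ : MemLp g 2 volume) (x : ℝ) :
    HasDerivAt (crossCorr f g) (-crossCorr (deriv f) g x) x := by
  have hK := ((continuous_crossCorr hf'₂ hg₂).integral_hasStrictDerivAt 0 x).hasDerivAt
  refine (hK.neg.const_add (crossCorr f g 0)).congr_of_eventuallyEq (.of_forall fun z => ?_)
  show crossCorr f g z = crossCorr f g 0 + -∫ t in 0..z, crossCorr (deriv f) g t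
  linarith [crossCorr_sub_crossCorr_zero hf hf₂ hf'₂ hg hg₂ z]

lemma hasDerivAt_crossCorr_right (hf : ContDiff ℝ 1 f) (hf₂ : MemLp f 2 volume)
    (hf'₂ : MemLp (deriv f) 2 volume) (hg : Continuous g) (hg₂ : MemLp g 2 volume) (x : ℝ) :
    HasDerivAt (crossCorr g f) (crossCorr g (deriv f) x) x := by
  have := (hasDerivAt_crossCorr_left hf hf₂ hf'₂ hg hg₂ (-x)).comp x (hasDerivAt_neg x)
  rw [neg_mul_neg, mul_one, crossCorr_neg] at this
  rwa [show crossCorr f g ∘ Neg.neg = crossCorr g f from funext (crossCorr_neg f g)] at this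

end

/-- If `h` is continuously differentiable with `h, h' ∈ L²(ℝ)`, then
`ρ(x) = ∫ h(y-x) h(y) dy` is twice continuously differentiable with
`ρ' x = -∫ h'(y-x) h(y) dy` and `ρ'' x = -∫ h'(y-x) h'(y) dy`; consequently
`|ρ'' x| ≤ ∫ h'(y)² dy` for all `x`, and `ρ'' 0 = -∫ h'(y)² dy`. -/
theorem stmt_3 (h : ℝ → ℝ) (hc : ContDiff ℝ 1 h)
    (hh : MemLp h 2 (volume : Measure ℝ))
    (hh' : MemLp (deriv h) 2 (volume : Measure ℝ))
    (ρ : ℝ → ℝ) (hρ : ∀ x, ρ x = ∫ y, h (y - x) * h y) :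
    ContDiff ℝ 2 ρ ∧
    (∀ x : ℝ, deriv ρ x = -∫ y, deriv h (y - x) * h y) ∧
    (∀ x : ℝ, deriv (deriv ρ) x = -∫ y, deriv h (y - x) * deriv h y) ∧
    (∀ x : ℝ, |deriv (deriv ρ) x| ≤ ∫ y, (deriv h y) ^ 2) ∧
    deriv (deriv ρ) 0 = -∫ y, (deriv h y) ^ 2 := by
  have hc' : Continuous (deriv h) := hc.continuous_deriv le_rfl
  have hρ' : ρ = crossCorr h h := funext hρ
  have hd₁ (x : ℝ) : HasDerivAt ρ (-crossCorr (deriv h) h x) x :=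
    hρ' ▸ hasDerivAt_crossCorr_left hc hh hh' hc.continuous hh x
  have hρd : deriv ρ = fun x => -crossCorr (deriv h) h x := funext fun x => (hd₁ x).deriv
  have hd₂ (x : ℝ) : HasDerivAt (deriv ρ) (-crossCorr (deriv h) (deriv h) x) x :=
    hρd ▸ (hasDerivAt_crossCorr_right hc hh hh' hc' hh' x).neg
  have hρdd : deriv (deriv ρ) = fun x => -crossCorr (deriv h) (deriv h) x :=
    funext fun x => (hd₂ x).deriv
  refine ⟨?_, fun x => by rw [hρd]; rfl, fun x => by rw [hρdd]; rfl, fun x => ?_, ?_⟩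
  · rw [show (2 : WithTop ℕ∞) = 1 + 1 from rfl, contDiff_succ_iff_deriv, contDiff_one_iff_deriv,
      hρdd]
    exact ⟨fun x => (hd₁ x).differentiableAt, by simp, fun x => (hd₂ x).differentiableAt,
      (continuous_crossCorr hh' hh').neg⟩
  · rw [hρdd, abs_neg]
    simpa [crossCorr, sq] using abs_crossCorr_le_crossCorr_zero hh' x
  · simp [hρdd, crossCorr, sq]
end

section
/- There exists an integer k₀ ≥ 3 (depending only on sup_x |b(x)| and sup_x σ(x)) such that for every integer k ≥ k₀ and every x ∈ ℝ, the numbers p₀^{(k)}(x), p₂^{(k)}(x) and p_k^{(k)}(x) all lie in the interval [0, 1]; in particular {p₀^{(k)}(x), p₂^{(k)}(x), p_k^{(k)}(x)} is a probability distribution (the offspring distribution placing mass on 0, 2 and k children). -/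
/-!
Write `t = b(x)/√k` and `u = σ_k(x)`. A direct computation gives
`p₀ = (k - 2)(k(1 + t) + u - 1) / D_k`, so `p₀` and `p_k` are nonnegative as soon as `t ≥ -1` (note `u ≥ 1`),
and since the three numbers sum to one it remains to see `p₂ ≥ 0`, i.e. `k u ≤ (k - 1)²(1 - t)`.
Here `t = O(k^{-1/2})` while `k u = O(k^{3/2})` against `(k - 1)² ≍ k²`, so this holds once `√k`
exceeds a multiple of the bounds on `|b|` and `σ`.
-/

open Set

-- The paper's `p₂^{(k)}(x)` and `p_k^{(k)}(x)`, with `t = b(x)/√k` and `u = σ_k(x)`.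
noncomputable def offspringP2 (k t u : ℝ) : ℝ :=
  ((k - 1) ^ 2 * (1 - t) - k * u) / (2 * (k - 1) ^ 2 - k)

noncomputable def offspringPk (k t u : ℝ) : ℝ :=
  (2 * u - 1 + t) / (2 * (k - 1) ^ 2 - k)

section Offspring

variable {k t u : ℝ}

lemma offspring_denom_pos (hk : 3 ≤ k) : 0 < 2 * (k - 1) ^ 2 - k := by
  nlinarith

lemma one_sub_offspringP2_sub_offspringPk (hk : 3 ≤ k) :
    1 - offspringP2 k t u - offspringPk k t u =
      (k - 2) * (k * (1 + t) + u - 1) / (2 * (k - 1) ^ 2 - k) := by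
  have hD := (offspring_denom_pos hk).ne'
  rw [eq_div_iff hD, offspringP2, offspringPk, sub_mul, sub_mul, div_mul_cancel₀ _ hD,
    div_mul_cancel₀ _ hD]
  ring

lemma offspringP2_nonneg (hk : 3 ≤ k) (h : k * u ≤ (k - 1) ^ 2 * (1 - t)) :
    0 ≤ offspringP2 k t u :=
  div_nonneg (sub_nonneg.2 h) (offspring_denom_pos hk).le

lemma offspringPk_nonneg (hk : 3 ≤ k) (ht : -1 ≤ t) (hu : 1 ≤ u) :
    0 ≤ offspringPk k t u :=
  div_nonneg (by linarith) (offspring_denom_pos hk).le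

lemma one_sub_offspringP2_sub_offspringPk_nonneg (hk : 3 ≤ k) (ht : -1 ≤ t) (hu : 1 ≤ u) :
    0 ≤ 1 - offspringP2 k t u - offspringPk k t u := by
  rw [one_sub_offspringP2_sub_offspringPk hk]
  have hkt : 0 ≤ k * (1 + t) := mul_nonneg (by linarith) (by linarith)
  exact div_nonneg (mul_nonneg (by linarith) (by linarith)) (offspring_denom_pos hk).le

end Offspring

lemma mem_Icc_of_nonneg_of_one_sub_sub_nonneg {p q : ℝ} (hp : 0 ≤ p) (hq : 0 ≤ q)
    (hpq : 0 ≤ 1 - p - q) :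
    1 - p - q ∈ Icc (0 : ℝ) 1 ∧ p ∈ Icc (0 : ℝ) 1 ∧ q ∈ Icc (0 : ℝ) 1 :=
  ⟨⟨hpq, by linarith⟩, ⟨hp, by linarith⟩, ⟨hq, by linarith⟩⟩

lemma sq_mul_le_sq_sub_one_sq_mul {s σ t C : ℝ} (hσ : 0 ≤ σ) (hσC : σ ≤ C) (ht : t ≤ 1 / 2)
    (hs : 2 * C + 4 ≤ s) :
    s ^ 2 * (s * σ + 1) ≤ (s ^ 2 - 1) ^ 2 * (1 - t) := by
  have hs1 : 1 ≤ s := by linarith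
  calc s ^ 2 * (s * σ + 1) ≤ s ^ 2 * (s * C + 1) := by gcongr
    _ ≤ (s ^ 2 - 1) ^ 2 / 2 := by
      nlinarith [mul_nonneg (pow_nonneg (by linarith : (0 : ℝ) ≤ s) 3) (sub_nonneg.2 hs),
        pow_le_pow_right₀ hs1 (by norm_num : 2 ≤ 3)]
    _ ≤ (s ^ 2 - 1) ^ 2 * (1 - t) := by nlinarith [sq_nonneg (s ^ 2 - 1)]

lemma abs_div_le_half {a s C : ℝ} (ha : |a| ≤ C) (hs : 2 * C ≤ s) (hs0 : 0 < s) :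
    |a / s| ≤ 1 / 2 := by
  rw [abs_div, abs_of_pos hs0, div_le_iff₀ hs0]
  linarith

/-- There is an integer `k₀ ≥ 3` such that for every `k ≥ k₀` and every `x`,
the numbers `p₀^{(k)}(x)`, `p₂^{(k)}(x)`, `p_k^{(k)}(x)` all lie in `[0, 1]`;
in particular they form a probability distribution (on 0, 2 and k children). -/
theorem stmt_14 (b σ : ℝ → ℝ)
    (hb : ∃ C, ∀ x, |b x| ≤ C) (hσbd : ∃ C, ∀ x, σ x ≤ C)
    (hσ : ∀ x, 0 ≤ σ x)
    (σk p2 pk p0 : ℕ → ℝ → ℝ)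
    (hσk : ∀ k : ℕ, 3 ≤ k → ∀ x, σk k x = Real.sqrt k * σ x + 1)
    (hp2 : ∀ k : ℕ, 3 ≤ k → ∀ x, p2 k x =
      (((k : ℝ) - 1) ^ 2 * (1 - b x / Real.sqrt k) - k * σk k x) /
        (2 * ((k : ℝ) - 1) ^ 2 - k))
    (hpk : ∀ k : ℕ, 3 ≤ k → ∀ x, pk k x =
      (2 * σk k x - 1 + b x / Real.sqrt k) / (2 * ((k : ℝ) - 1) ^ 2 - k))
    (hp0 : ∀ k : ℕ, 3 ≤ k → ∀ x, p0 k x = 1 - p2 k x - pk k x) :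
    ∃ k₀ : ℕ, 3 ≤ k₀ ∧ ∀ k : ℕ, k₀ ≤ k → ∀ x : ℝ,
      (p0 k x ∈ Set.Icc (0 : ℝ) 1 ∧ p2 k x ∈ Set.Icc (0 : ℝ) 1 ∧
        pk k x ∈ Set.Icc (0 : ℝ) 1) ∧
      p0 k x + p2 k x + pk k x = 1 := by
  obtain ⟨C, hC⟩ := hb
  obtain ⟨C', hC'⟩ := hσbd
  have hC0 : 0 ≤ C := (abs_nonneg _).trans (hC 0)
  have hC'0 : 0 ≤ C' := (hσ 0).trans (hC' 0)
  have hk₀ : 3 ≤ ⌈(2 * C + 2 * C' + 4) ^ 2⌉₊ := Nat.lt_ceil.2 (by push_cast; nlinarith)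
  refine ⟨_, hk₀, fun k hk x => ?_⟩
  have hkM : (2 * C + 2 * C' + 4) ^ 2 ≤ (k : ℝ) := Nat.ceil_le.1 hk
  have hk3 : 3 ≤ k := hk₀.trans hk
  have hk3' : (3 : ℝ) ≤ k := by exact_mod_cast hk3
  have hs : 2 * C + 2 * C' + 4 ≤ √(k : ℝ) := Real.le_sqrt_of_sq_le hkM
  have ht : |b x / √(k : ℝ)| ≤ 1 / 2 := abs_div_le_half (hC x) (by linarith) (by linarith)
  have hu : 1 ≤ σk k x := by
    rw [hσk k hk3 x]
    have := mul_nonneg (Real.sqrt_nonneg (k : ℝ)) (hσ x)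
    linarith
  have hdom : k * σk k x ≤ ((k : ℝ) - 1) ^ 2 * (1 - b x / √(k : ℝ)) := by
    have h := sq_mul_le_sq_sub_one_sq_mul (hσ x) (hC' x) (abs_le.1 ht).2 (s := √(k : ℝ))
      (by linarith)
    rwa [Real.sq_sqrt (Nat.cast_nonneg k), ← hσk k hk3 x] at h
  have htl : -1 ≤ b x / √(k : ℝ) := by linarith [(abs_le.1 ht).1]
  have e2 : p2 k x = offspringP2 k (b x / √(k : ℝ)) (σk k x) := hp2 k hk3 x
  have ek : pk k x = offspringPk k (b x / √(k : ℝ)) (σk k x) := hpk k hk3 x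
  rw [hp0 k hk3 x, e2, ek]
  exact ⟨mem_Icc_of_nonneg_of_one_sub_sub_nonneg (offspringP2_nonneg hk3' hdom)
    (offspringPk_nonneg hk3' htl hu) (one_sub_offspringP2_sub_offspringPk_nonneg hk3' htl hu),
    by ring⟩
end
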